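/- For the metric on R^4 with g(∂x_1,∂x_3)=g(∂x_2,∂x_4)=1, g(∂x_3,∂x_4)=s(x_2^2-x_1^2)/2, g(∂x_3,∂x_3)=s x_1 x_2, g(∂x_4,∂x_4)=-s x_1 x_2, the (0,4) curvature tensor R satisfies R(rho ξ_1, ξ_2, ξ_3, rho ξ_4) = -s^2 R(ξ_1,ξ_2,ξ_3,ξ_4) for all tangent vectors ξ_i, where rho is the Ricci operator. Consequently R(rho ξ_1,ξ_2,ξ_3,ξ_4) = R(ξ_1,ξ_2,ξ_3,rho ξ_4) for all ξ_i, and M is Jacobi--Videv and skew--Videv. -/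
import Mathlib


noncomputable section

open Finset in
/-- Partial derivative in the `i`-th coordinate direction. -/
def pd {ι : Type*} [Fintype ι] [DecidableEq ι]
    (i : ι) (f : (ι → ℝ) → ℝ) (p : ι → ℝ) : ℝ :=
  fderiv ℝ f p (Pi.single i 1)

/-- Christoffel symbols of the second kind `Γ^k_{ij}` of the metric `g`
(with inverse metric `ginv`). -/
def christoffel {ι : Type*} [Fintype ι] [DecidableEq ι]
    (g ginv : (ι → ℝ) → Matrix ι ι ℝ) (k i j : ι) (p : ι → ℝ) : ℝ :=
  (1 / 2) * ∑ l, ginv p k l *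
    (pd i (fun q => g q j l) p + pd j (fun q => g q i l) p - pd l (fun q => g q i j) p)

/-- Components of the curvature operator of the Levi-Civita connection:
`R(∂_i,∂_j)∂_k = ∑_l (curvOp g ginv i j k l) ∂_l`. -/
def curvOp {ι : Type*} [Fintype ι] [DecidableEq ι]
    (g ginv : (ι → ℝ) → Matrix ι ι ℝ) (i j k l : ι) (p : ι → ℝ) : ℝ :=
  pd i (christoffel g ginv l j k) p - pd j (christoffel g ginv l i k) p
    + ∑ m, christoffel g ginv l i m p * christoffel g ginv m j k p
    - ∑ m, christoffel g ginv l j m p * christoffel g ginv m i k p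

/-- The curvature operator extended multilinearly to tangent vectors:
component `l` of `R(v,w)u`. -/
def curvVec {ι : Type*} [Fintype ι] [DecidableEq ι]
    (g ginv : (ι → ℝ) → Matrix ι ι ℝ) (p : ι → ℝ) (v w u : ι → ℝ) : ι → ℝ :=
  fun l => ∑ i, ∑ j, ∑ k, v i * w j * u k * curvOp g ginv i j k l p

/-- The polarized Jacobi operator `J(v,w)u = (1/2){R(u,v)w + R(u,w)v}`. -/
def jacobiVec {ι : Type*} [Fintype ι] [DecidableEq ι]
    (g ginv : (ι → ℝ) → Matrix ι ι ℝ) (p : ι → ℝ) (v w u : ι → ℝ) : ι → ℝ :=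
  fun l => (1 / 2) * (curvVec g ginv p u v w l + curvVec g ginv p u w v l)

/-- The Ricci tensor `Ric_{ij} = Tr (z ↦ R(z,∂_i)∂_j)`. -/
def ricci {ι : Type*} [Fintype ι] [DecidableEq ι]
    (g ginv : (ι → ℝ) → Matrix ι ι ℝ) (i j : ι) (p : ι → ℝ) : ℝ :=
  ∑ m, curvOp g ginv m i j m p

/-- The Ricci operator (Ricci tensor with one index raised by `g`), as a matrix:
`rho(∂_j) = ∑_i (ricciOp p) i j ∂_i`. -/
def ricciOp {ι : Type*} [Fintype ι] [DecidableEq ι]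
    (g ginv : (ι → ℝ) → Matrix ι ι ℝ) (p : ι → ℝ) : Matrix ι ι ℝ :=
  fun i j => ∑ m, ginv p i m * ricci g ginv m j p

/-- The (0,4) curvature tensor `R_{ijkl} = g(R(∂_i,∂_j)∂_k, ∂_l)`. -/
def curv4 {ι : Type*} [Fintype ι] [DecidableEq ι]
    (g ginv : (ι → ℝ) → Matrix ι ι ℝ) (i j k l : ι) (p : ι → ℝ) : ℝ :=
  ∑ m, curvOp g ginv i j k m p * g p m l

/-- The metric of Theorem 1.9 on `ℝ⁴`: `g(∂x₁,∂x₃) = g(∂x₂,∂x₄) = 1`,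
`g(∂x₃,∂x₄) = s(x₂² - x₁²)/2`, `g(∂x₃,∂x₃) = s x₁x₂`, `g(∂x₄,∂x₄) = -s x₁x₂`. -/
def gSym (s : ℝ) (p : Fin 4 → ℝ) : Matrix (Fin 4) (Fin 4) ℝ :=
  Matrix.of
    ![![0, 0, 1, 0],
      ![0, 0, 0, 1],
      ![1, 0, s * p 0 * p 1, s * ((p 1) ^ 2 - (p 0) ^ 2) / 2],
      ![0, 1, s * ((p 1) ^ 2 - (p 0) ^ 2) / 2, -(s * p 0 * p 1)]]

/-- The (0,4) curvature tensor extended multilinearly to tangent vectors. -/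
def curv4Vec {ι : Type*} [Fintype ι] [DecidableEq ι]
    (g ginv : (ι → ℝ) → Matrix ι ι ℝ) (p : ι → ℝ) (v w u z : ι → ℝ) : ℝ :=
  ∑ i, ∑ j, ∑ k, ∑ l, v i * w j * u k * z l * curv4 g ginv i j k l p

def ginvE (s : ℝ) (p : Fin 4 → ℝ) : Matrix (Fin 4) (Fin 4) ℝ :=
  Matrix.of
    ![![-(s * p 0 * p 1), -(s * ((p 1) ^ 2 - (p 0) ^ 2) / 2), 1, 0],
      ![-(s * ((p 1) ^ 2 - (p 0) ^ 2) / 2), s * p 0 * p 1, 0, 1],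
      ![1, 0, 0, 0],
      ![0, 1, 0, 0]]

lemma gSym_mul_ginvE (s : ℝ) (p : Fin 4 → ℝ) : gSym s p * ginvE s p = 1 := by
  ext i j
  fin_cases i <;> fin_cases j <;>
    simp [gSym, ginvE, Matrix.mul_apply, Fin.sum_univ_four, Matrix.one_apply,
      Matrix.cons_val_zero, Matrix.cons_val_one, Matrix.cons_val_two, Matrix.cons_val_three,
      Matrix.head_cons, Matrix.vecHead, Matrix.vecTail, Function.comp] <;> ring

def poly (c₀ c₁ c₂ c₃ c₄ c₅ c₆ c₇ c₈ c₉ : ℝ) : (Fin 4 → ℝ) → ℝ :=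
  fun q => c₀ + c₁ * q 0 + c₂ * q 1 + c₃ * (q 0 * q 1) + c₄ * (q 0 * q 0) + c₅ * (q 1 * q 1)
    + c₆ * (q 0 * (q 0 * q 0)) + c₇ * (q 1 * (q 1 * q 1)) + c₈ * (q 0 * (q 0 * q 1))
    + c₉ * (q 0 * (q 1 * q 1))

lemma pd_eq {f : (Fin 4 → ℝ) → ℝ} {f' : (Fin 4 → ℝ) →L[ℝ] ℝ} {p : Fin 4 → ℝ}
    (h : HasFDerivAt f f' p) (i : Fin 4) : pd i f p = f' (Pi.single i 1) := by
  rw [pd, h.fderiv]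

lemma pd_poly (c₀ c₁ c₂ c₃ c₄ c₅ c₆ c₇ c₈ c₉ : ℝ) (i : Fin 4) (p : Fin 4 → ℝ) :
    pd i (poly c₀ c₁ c₂ c₃ c₄ c₅ c₆ c₇ c₈ c₉) p =
      (c₁ + c₃ * p 1 + 2 * c₄ * p 0 + 3 * c₆ * (p 0 * p 0) + c₈ * (2 * (p 0 * p 1))
          + c₉ * (p 1 * p 1)) * (Pi.single i (1:ℝ) : Fin 4 → ℝ) 0
        + (c₂ + c₃ * p 0 + 2 * c₅ * p 1 + 3 * c₇ * (p 1 * p 1) + c₈ * (p 0 * p 0)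
          + 2 * c₉ * (p 0 * p 1)) * (Pi.single i (1:ℝ) : Fin 4 → ℝ) 1 := by
  have h0 : HasFDerivAt (fun q : Fin 4 → ℝ => q 0)
      (ContinuousLinearMap.proj (R := ℝ) (φ := fun _ : Fin 4 => ℝ) 0) p :=
    (ContinuousLinearMap.proj (R := ℝ) (φ := fun _ : Fin 4 => ℝ) (0 : Fin 4)).hasFDerivAt
  have h1 : HasFDerivAt (fun q : Fin 4 → ℝ => q 1)
      (ContinuousLinearMap.proj (R := ℝ) (φ := fun _ : Fin 4 => ℝ) 1) p :=
    (ContinuousLinearMap.proj (R := ℝ) (φ := fun _ : Fin 4 => ℝ) (1 : Fin 4)).hasFDerivAt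
  have hf := (((((((((hasFDerivAt_const c₀ p).add (h0.const_mul c₁)).add
    (h1.const_mul c₂)).add ((h0.mul h1).const_mul c₃)).add
    ((h0.mul h0).const_mul c₄)).add ((h1.mul h1).const_mul c₅)).add
    ((h0.mul (h0.mul h0)).const_mul c₆)).add ((h1.mul (h1.mul h1)).const_mul c₇)).add
    ((h0.mul (h0.mul h1)).const_mul c₈)).add ((h0.mul (h1.mul h1)).const_mul c₉)
  have hf' : HasFDerivAt (poly c₀ c₁ c₂ c₃ c₄ c₅ c₆ c₇ c₈ c₉) _ p := hf
  rw [pd_eq hf']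
  simp [ContinuousLinearMap.proj_apply, smul_eq_mul]
  ring
def gc0 (s : ℝ) : Fin 4 → Fin 4 → ℝ :=
  ![![0, 0, 1, 0],
    ![0, 0, 0, 1],
    ![1, 0, 0, 0],
    ![0, 1, 0, 0]]
def gc1 (s : ℝ) : Fin 4 → Fin 4 → ℝ :=
  ![![0, 0, 0, 0],
    ![0, 0, 0, 0],
    ![0, 0, 0, 0],
    ![0, 0, 0, 0]]
def gc2 (s : ℝ) : Fin 4 → Fin 4 → ℝ :=
  ![![0, 0, 0, 0],
    ![0, 0, 0, 0],
    ![0, 0, 0, 0],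
    ![0, 0, 0, 0]]
def gc3 (s : ℝ) : Fin 4 → Fin 4 → ℝ :=
  ![![0, 0, 0, 0],
    ![0, 0, 0, 0],
    ![0, 0, 1*s, 0],
    ![0, 0, 0, -1*s]]
def gc4 (s : ℝ) : Fin 4 → Fin 4 → ℝ :=
  ![![0, 0, 0, 0],
    ![0, 0, 0, 0],
    ![0, 0, 0, (-1/2)*s],
    ![0, 0, (-1/2)*s, 0]]
def gc5 (s : ℝ) : Fin 4 → Fin 4 → ℝ :=
  ![![0, 0, 0, 0],
    ![0, 0, 0, 0],
    ![0, 0, 0, (1/2)*s],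
    ![0, 0, (1/2)*s, 0]]
def gc6 (s : ℝ) : Fin 4 → Fin 4 → ℝ :=
  ![![0, 0, 0, 0],
    ![0, 0, 0, 0],
    ![0, 0, 0, 0],
    ![0, 0, 0, 0]]
def gc7 (s : ℝ) : Fin 4 → Fin 4 → ℝ :=
  ![![0, 0, 0, 0],
    ![0, 0, 0, 0],
    ![0, 0, 0, 0],
    ![0, 0, 0, 0]]
def gc8 (s : ℝ) : Fin 4 → Fin 4 → ℝ :=
  ![![0, 0, 0, 0],
    ![0, 0, 0, 0],
    ![0, 0, 0, 0],
    ![0, 0, 0, 0]]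
def gc9 (s : ℝ) : Fin 4 → Fin 4 → ℝ :=
  ![![0, 0, 0, 0],
    ![0, 0, 0, 0],
    ![0, 0, 0, 0],
    ![0, 0, 0, 0]]
def Gam0 (s : ℝ) : Fin 4 → Fin 4 → Fin 4 → ℝ :=
  ![![![0, 0, 0, 0],
     ![0, 0, 0, 0],
     ![0, 0, 0, 0],
     ![0, 0, 0, 0]],
   ![![0, 0, 0, 0],
     ![0, 0, 0, 0],
     ![0, 0, 0, 0],
     ![0, 0, 0, 0]],
   ![![0, 0, 0, 0],
     ![0, 0, 0, 0],
     ![0, 0, 0, 0],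
     ![0, 0, 0, 0]],
   ![![0, 0, 0, 0],
     ![0, 0, 0, 0],
     ![0, 0, 0, 0],
     ![0, 0, 0, 0]]]
def Gam1 (s : ℝ) : Fin 4 → Fin 4 → Fin 4 → ℝ :=
  ![![![0, 0, 0, (-1/2)*s],
     ![0, 0, (1/2)*s, 0],
     ![0, (1/2)*s, 0, 0],
     ![(-1/2)*s, 0, 0, 0]],
   ![![0, 0, (-1/2)*s, 0],
     ![0, 0, 0, (-1/2)*s],
     ![(-1/2)*s, 0, 0, 0],
     ![0, (-1/2)*s, 0, 0]],
   ![![0, 0, 0, 0],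
     ![0, 0, 0, 0],
     ![0, 0, 0, (1/2)*s],
     ![0, 0, (1/2)*s, 0]],
   ![![0, 0, 0, 0],
     ![0, 0, 0, 0],
     ![0, 0, (-1/2)*s, 0],
     ![0, 0, 0, (1/2)*s]]]
def Gam2 (s : ℝ) : Fin 4 → Fin 4 → Fin 4 → ℝ :=
  ![![![0, 0, (1/2)*s, 0],
     ![0, 0, 0, (1/2)*s],
     ![(1/2)*s, 0, 0, 0],
     ![0, (1/2)*s, 0, 0]],
   ![![0, 0, 0, (-1/2)*s],
     ![0, 0, (1/2)*s, 0],
     ![0, (1/2)*s, 0, 0],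
     ![(-1/2)*s, 0, 0, 0]],
   ![![0, 0, 0, 0],
     ![0, 0, 0, 0],
     ![0, 0, (-1/2)*s, 0],
     ![0, 0, 0, (1/2)*s]],
   ![![0, 0, 0, 0],
     ![0, 0, 0, 0],
     ![0, 0, 0, (-1/2)*s],
     ![0, 0, (-1/2)*s, 0]]]
def Gam3 (s : ℝ) : Fin 4 → Fin 4 → Fin 4 → ℝ :=
  ![![![0, 0, 0, 0],
     ![0, 0, 0, 0],
     ![0, 0, 0, 0],
     ![0, 0, 0, 0]],
   ![![0, 0, 0, 0],
     ![0, 0, 0, 0],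
     ![0, 0, 0, 0],
     ![0, 0, 0, 0]],
   ![![0, 0, 0, 0],
     ![0, 0, 0, 0],
     ![0, 0, 0, 0],
     ![0, 0, 0, 0]],
   ![![0, 0, 0, 0],
     ![0, 0, 0, 0],
     ![0, 0, 0, 0],
     ![0, 0, 0, 0]]]
def Gam4 (s : ℝ) : Fin 4 → Fin 4 → Fin 4 → ℝ :=
  ![![![0, 0, 0, 0],
     ![0, 0, 0, 0],
     ![0, 0, 0, 0],
     ![0, 0, 0, 0]],
   ![![0, 0, 0, 0],
     ![0, 0, 0, 0],
     ![0, 0, 0, 0],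
     ![0, 0, 0, 0]],
   ![![0, 0, 0, 0],
     ![0, 0, 0, 0],
     ![0, 0, 0, 0],
     ![0, 0, 0, 0]],
   ![![0, 0, 0, 0],
     ![0, 0, 0, 0],
     ![0, 0, 0, 0],
     ![0, 0, 0, 0]]]
def Gam5 (s : ℝ) : Fin 4 → Fin 4 → Fin 4 → ℝ :=
  ![![![0, 0, 0, 0],
     ![0, 0, 0, 0],
     ![0, 0, 0, 0],
     ![0, 0, 0, 0]],
   ![![0, 0, 0, 0],
     ![0, 0, 0, 0],
     ![0, 0, 0, 0],
     ![0, 0, 0, 0]],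
   ![![0, 0, 0, 0],
     ![0, 0, 0, 0],
     ![0, 0, 0, 0],
     ![0, 0, 0, 0]],
   ![![0, 0, 0, 0],
     ![0, 0, 0, 0],
     ![0, 0, 0, 0],
     ![0, 0, 0, 0]]]
def Gam6 (s : ℝ) : Fin 4 → Fin 4 → Fin 4 → ℝ :=
  ![![![0, 0, 0, 0],
     ![0, 0, 0, 0],
     ![0, 0, (-1/4)*s^2, 0],
     ![0, 0, 0, (1/4)*s^2]],
   ![![0, 0, 0, 0],
     ![0, 0, 0, 0],
     ![0, 0, 0, (1/4)*s^2],
     ![0, 0, (1/4)*s^2, 0]],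
   ![![0, 0, 0, 0],
     ![0, 0, 0, 0],
     ![0, 0, 0, 0],
     ![0, 0, 0, 0]],
   ![![0, 0, 0, 0],
     ![0, 0, 0, 0],
     ![0, 0, 0, 0],
     ![0, 0, 0, 0]]]
def Gam7 (s : ℝ) : Fin 4 → Fin 4 → Fin 4 → ℝ :=
  ![![![0, 0, 0, 0],
     ![0, 0, 0, 0],
     ![0, 0, 0, (1/4)*s^2],
     ![0, 0, (1/4)*s^2, 0]],
   ![![0, 0, 0, 0],
     ![0, 0, 0, 0],
     ![0, 0, (1/4)*s^2, 0],
     ![0, 0, 0, (-1/4)*s^2]],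
   ![![0, 0, 0, 0],
     ![0, 0, 0, 0],
     ![0, 0, 0, 0],
     ![0, 0, 0, 0]],
   ![![0, 0, 0, 0],
     ![0, 0, 0, 0],
     ![0, 0, 0, 0],
     ![0, 0, 0, 0]]]
def Gam8 (s : ℝ) : Fin 4 → Fin 4 → Fin 4 → ℝ :=
  ![![![0, 0, 0, 0],
     ![0, 0, 0, 0],
     ![0, 0, 0, (-3/4)*s^2],
     ![0, 0, (-3/4)*s^2, 0]],
   ![![0, 0, 0, 0],
     ![0, 0, 0, 0],
     ![0, 0, (-3/4)*s^2, 0],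
     ![0, 0, 0, (3/4)*s^2]],
   ![![0, 0, 0, 0],
     ![0, 0, 0, 0],
     ![0, 0, 0, 0],
     ![0, 0, 0, 0]],
   ![![0, 0, 0, 0],
     ![0, 0, 0, 0],
     ![0, 0, 0, 0],
     ![0, 0, 0, 0]]]
def Gam9 (s : ℝ) : Fin 4 → Fin 4 → Fin 4 → ℝ :=
  ![![![0, 0, 0, 0],
     ![0, 0, 0, 0],
     ![0, 0, (3/4)*s^2, 0],
     ![0, 0, 0, (-3/4)*s^2]],
   ![![0, 0, 0, 0],
     ![0, 0, 0, 0],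
     ![0, 0, 0, (-3/4)*s^2],
     ![0, 0, (-3/4)*s^2, 0]],
   ![![0, 0, 0, 0],
     ![0, 0, 0, 0],
     ![0, 0, 0, 0],
     ![0, 0, 0, 0]],
   ![![0, 0, 0, 0],
     ![0, 0, 0, 0],
     ![0, 0, 0, 0],
     ![0, 0, 0, 0]]]
def RcE (s : ℝ) (p : Fin 4 → ℝ) : Fin 4 → Fin 4 → Fin 4 → Fin 4 → ℝ :=
  ![![![![0, 0, 0, 0], ![0, 0, 0, 0], ![0, 0, 0, 0], ![0, 0, 0, 0]],
     ![![0, 0, 0, 0], ![0, 0, 0, 0], ![0, 0, 0, 0], ![0, 0, 0, 0]],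
     ![![0, (-1/2)*s, 0, 0], ![(1/2)*s, 0, 0, 0], ![(1/4)*s^2*p 1*p 1 + (-1/4)*s^2*p 0*p 0, (-1/2)*s^2*p 0*p 1, 0, (-1/2)*s], ![(-1/2)*s^2*p 0*p 1, (-1/4)*s^2*p 1*p 1 + (1/4)*s^2*p 0*p 0, (1/2)*s, 0]],
     ![![(-1/2)*s, 0, 0, 0], ![0, (-1/2)*s, 0, 0], ![(-1/2)*s^2*p 0*p 1, (-1/4)*s^2*p 1*p 1 + (1/4)*s^2*p 0*p 0, (1/2)*s, 0], ![(-1/4)*s^2*p 1*p 1 + (1/4)*s^2*p 0*p 0, (1/2)*s^2*p 0*p 1, 0, (1/2)*s]]],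
   ![![![0, 0, 0, 0], ![0, 0, 0, 0], ![0, 0, 0, 0], ![0, 0, 0, 0]],
     ![![0, 0, 0, 0], ![0, 0, 0, 0], ![0, 0, 0, 0], ![0, 0, 0, 0]],
     ![![(1/2)*s, 0, 0, 0], ![0, (1/2)*s, 0, 0], ![(1/2)*s^2*p 0*p 1, (1/4)*s^2*p 1*p 1 + (-1/4)*s^2*p 0*p 0, (-1/2)*s, 0], ![(1/4)*s^2*p 1*p 1 + (-1/4)*s^2*p 0*p 0, (-1/2)*s^2*p 0*p 1, 0, (-1/2)*s]],
     ![![0, (-1/2)*s, 0, 0], ![(1/2)*s, 0, 0, 0], ![(1/4)*s^2*p 1*p 1 + (-1/4)*s^2*p 0*p 0, (-1/2)*s^2*p 0*p 1, 0, (-1/2)*s], ![(-1/2)*s^2*p 0*p 1, (-1/4)*s^2*p 1*p 1 + (1/4)*s^2*p 0*p 0, (1/2)*s, 0]]],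
   ![![![0, (1/2)*s, 0, 0], ![(-1/2)*s, 0, 0, 0], ![(-1/4)*s^2*p 1*p 1 + (1/4)*s^2*p 0*p 0, (1/2)*s^2*p 0*p 1, 0, (1/2)*s], ![(1/2)*s^2*p 0*p 1, (1/4)*s^2*p 1*p 1 + (-1/4)*s^2*p 0*p 0, (-1/2)*s, 0]],
     ![![(-1/2)*s, 0, 0, 0], ![0, (-1/2)*s, 0, 0], ![(-1/2)*s^2*p 0*p 1, (-1/4)*s^2*p 1*p 1 + (1/4)*s^2*p 0*p 0, (1/2)*s, 0], ![(-1/4)*s^2*p 1*p 1 + (1/4)*s^2*p 0*p 0, (1/2)*s^2*p 0*p 1, 0, (1/2)*s]],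
     ![![0, 0, 0, 0], ![0, 0, 0, 0], ![0, 0, 0, 0], ![0, 0, 0, 0]],
     ![![0, 0, 0, 0], ![0, 0, 0, 0], ![0, 0, 0, 0], ![0, 0, 0, 0]]],
   ![![![(1/2)*s, 0, 0, 0], ![0, (1/2)*s, 0, 0], ![(1/2)*s^2*p 0*p 1, (1/4)*s^2*p 1*p 1 + (-1/4)*s^2*p 0*p 0, (-1/2)*s, 0], ![(1/4)*s^2*p 1*p 1 + (-1/4)*s^2*p 0*p 0, (-1/2)*s^2*p 0*p 1, 0, (-1/2)*s]],
     ![![0, (1/2)*s, 0, 0], ![(-1/2)*s, 0, 0, 0], ![(-1/4)*s^2*p 1*p 1 + (1/4)*s^2*p 0*p 0, (1/2)*s^2*p 0*p 1, 0, (1/2)*s], ![(1/2)*s^2*p 0*p 1, (1/4)*s^2*p 1*p 1 + (-1/4)*s^2*p 0*p 0, (-1/2)*s, 0]],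
     ![![0, 0, 0, 0], ![0, 0, 0, 0], ![0, 0, 0, 0], ![0, 0, 0, 0]],
     ![![0, 0, 0, 0], ![0, 0, 0, 0], ![0, 0, 0, 0], ![0, 0, 0, 0]]]]
def R4c (s : ℝ) : Fin 4 → Fin 4 → Fin 4 → Fin 4 → ℝ :=
  ![![![![0, 0, 0, 0], ![0, 0, 0, 0], ![0, 0, 0, 0], ![0, 0, 0, 0]],
     ![![0, 0, 0, 0], ![0, 0, 0, 0], ![0, 0, 0, 0], ![0, 0, 0, 0]],
     ![![0, 0, 0, (-1/2)*s], ![0, 0, (1/2)*s, 0], ![0, (-1/2)*s, 0, 0], ![(1/2)*s, 0, 0, 0]],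
     ![![0, 0, (-1/2)*s, 0], ![0, 0, 0, (-1/2)*s], ![(1/2)*s, 0, 0, 0], ![0, (1/2)*s, 0, 0]]],
   ![![![0, 0, 0, 0], ![0, 0, 0, 0], ![0, 0, 0, 0], ![0, 0, 0, 0]],
     ![![0, 0, 0, 0], ![0, 0, 0, 0], ![0, 0, 0, 0], ![0, 0, 0, 0]],
     ![![0, 0, (1/2)*s, 0], ![0, 0, 0, (1/2)*s], ![(-1/2)*s, 0, 0, 0], ![0, (-1/2)*s, 0, 0]],
     ![![0, 0, 0, (-1/2)*s], ![0, 0, (1/2)*s, 0], ![0, (-1/2)*s, 0, 0], ![(1/2)*s, 0, 0, 0]]],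
   ![![![0, 0, 0, (1/2)*s], ![0, 0, (-1/2)*s, 0], ![0, (1/2)*s, 0, 0], ![(-1/2)*s, 0, 0, 0]],
     ![![0, 0, (-1/2)*s, 0], ![0, 0, 0, (-1/2)*s], ![(1/2)*s, 0, 0, 0], ![0, (1/2)*s, 0, 0]],
     ![![0, 0, 0, 0], ![0, 0, 0, 0], ![0, 0, 0, 0], ![0, 0, 0, 0]],
     ![![0, 0, 0, 0], ![0, 0, 0, 0], ![0, 0, 0, 0], ![0, 0, 0, 0]]],
   ![![![0, 0, (1/2)*s, 0], ![0, 0, 0, (1/2)*s], ![(-1/2)*s, 0, 0, 0], ![0, (-1/2)*s, 0, 0]],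
     ![![0, 0, 0, (1/2)*s], ![0, 0, (-1/2)*s, 0], ![0, (1/2)*s, 0, 0], ![(-1/2)*s, 0, 0, 0]],
     ![![0, 0, 0, 0], ![0, 0, 0, 0], ![0, 0, 0, 0], ![0, 0, 0, 0]],
     ![![0, 0, 0, 0], ![0, 0, 0, 0], ![0, 0, 0, 0], ![0, 0, 0, 0]]]]

def rhoM (s : ℝ) : Matrix (Fin 4) (Fin 4) ℝ :=
  Matrix.of ![![0, s, 0, 0], ![-s, 0, 0, 0], ![0, 0, 0, -s], ![0, 0, s, 0]]

lemma g_fun (s : ℝ) (j l : Fin 4) :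
    (fun q => gSym s q j l) = poly (gc0 s j l) (gc1 s j l) (gc2 s j l) (gc3 s j l)
      (gc4 s j l) (gc5 s j l) (gc6 s j l) (gc7 s j l) (gc8 s j l) (gc9 s j l) := by
  funext q
  fin_cases j <;> fin_cases l <;>
    (simp only [gSym, poly, gc0, gc1, gc2, gc3, gc4, gc5, gc6, gc7, gc8, gc9,
      Matrix.cons_val_zero, Matrix.cons_val_one, Matrix.cons_val_two,
      Matrix.cons_val_three, Matrix.head_cons, Matrix.tail_cons, Matrix.of_apply,
      Fin.reduceFinMk, Fin.isValue]) <;> ring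

set_option maxHeartbeats 4000000 in
lemma christoffel_eq (s : ℝ) (k i j : Fin 4) :
    christoffel (gSym s) (ginvE s) k i j = poly (Gam0 s k i j) (Gam1 s k i j) (Gam2 s k i j)
      (Gam3 s k i j) (Gam4 s k i j) (Gam5 s k i j) (Gam6 s k i j) (Gam7 s k i j)
      (Gam8 s k i j) (Gam9 s k i j) := by
  funext p
  fin_cases k <;> fin_cases i <;> fin_cases j <;>
    (simp only [christoffel, Fin.sum_univ_four, g_fun, pd_poly, poly]
     simp only [ginvE, gc0, gc1, gc2, gc3, gc4, gc5, gc6, gc7, gc8, gc9,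
       Gam0, Gam1, Gam2, Gam3, Gam4, Gam5, Gam6, Gam7, Gam8, Gam9, Pi.single_apply,
       Fin.reduceEq, reduceIte, if_true, if_false,
       Matrix.cons_val_zero, Matrix.cons_val_one, Matrix.cons_val_two,
       Matrix.cons_val_three, Matrix.head_cons, Matrix.tail_cons, Matrix.of_apply,
       Fin.reduceFinMk, Fin.isValue]) <;> ring

set_option maxHeartbeats 16000000 in
lemma curvOp_eq (s : ℝ) (i j k l : Fin 4) (p : Fin 4 → ℝ) :
    curvOp (gSym s) (ginvE s) i j k l p = RcE s p i j k l := by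
  fin_cases i <;> fin_cases j <;> fin_cases k <;> fin_cases l <;>
    (simp only [curvOp, Fin.sum_univ_four, christoffel_eq, pd_poly, poly]
     simp only [Gam0, Gam1, Gam2, Gam3, Gam4, Gam5, Gam6, Gam7, Gam8, Gam9, RcE,
       Pi.single_apply, Fin.reduceEq, reduceIte, if_true, if_false,
       Matrix.cons_val_zero, Matrix.cons_val_one, Matrix.cons_val_two,
       Matrix.cons_val_three, Matrix.head_cons, Matrix.tail_cons, Matrix.of_apply,
       Fin.reduceFinMk, Fin.isValue]) <;> ring

set_option maxHeartbeats 16000000 in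
lemma curv4_eq (s : ℝ) (i j k l : Fin 4) (p : Fin 4 → ℝ) :
    curv4 (gSym s) (ginvE s) i j k l p = R4c s i j k l := by
  fin_cases i <;> fin_cases j <;> fin_cases k <;> fin_cases l <;>
    (simp only [curv4, Fin.sum_univ_four, curvOp_eq]
     simp only [RcE, R4c, gSym,
       Matrix.cons_val_zero, Matrix.cons_val_one, Matrix.cons_val_two,
       Matrix.cons_val_three, Matrix.head_cons, Matrix.tail_cons, Matrix.of_apply,
       Fin.reduceFinMk, Fin.isValue]) <;> ring

set_option maxHeartbeats 4000000 in
lemma ricciOp_eq (s : ℝ) (p : Fin 4 → ℝ) :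
    ricciOp (gSym s) (ginvE s) p = rhoM s := by
  ext i j
  fin_cases i <;> fin_cases j <;>
    (simp only [ricciOp, ricci, Fin.sum_univ_four, curvOp_eq]
     simp only [RcE, rhoM, ginvE,
       Matrix.cons_val_zero, Matrix.cons_val_one, Matrix.cons_val_two,
       Matrix.cons_val_three, Matrix.head_cons, Matrix.tail_cons, Matrix.of_apply,
       Fin.reduceFinMk, Fin.isValue]) <;> ring

set_option maxHeartbeats 4000000 in
/-- For the metric `gSym s` with Ricci operator `rho`, the (0,4)
curvature tensor satisfies `R(rho ξ₁, ξ₂, ξ₃, rho ξ₄) = -s² R(ξ₁,ξ₂,ξ₃,ξ₄)`;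
consequently `R(rho ξ₁,ξ₂,ξ₃,ξ₄) = R(ξ₁,ξ₂,ξ₃,rho ξ₄)`, and the manifold is
Jacobi--Videv and skew--Videv. -/
theorem stmt_18 (s : ℝ)
    (ginv : (Fin 4 → ℝ) → Matrix (Fin 4) (Fin 4) ℝ)
    (hginv : ∀ p, gSym s p * ginv p = 1 ∧ ginv p * gSym s p = 1) :
    ∀ (p : Fin 4 → ℝ) (ξ₁ ξ₂ ξ₃ ξ₄ : Fin 4 → ℝ),
      curv4Vec (gSym s) ginv p (Matrix.mulVec (ricciOp (gSym s) ginv p) ξ₁) ξ₂ ξ₃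
          (Matrix.mulVec (ricciOp (gSym s) ginv p) ξ₄) =
        -(s ^ 2) * curv4Vec (gSym s) ginv p ξ₁ ξ₂ ξ₃ ξ₄ ∧
      curv4Vec (gSym s) ginv p (Matrix.mulVec (ricciOp (gSym s) ginv p) ξ₁) ξ₂ ξ₃ ξ₄ =
        curv4Vec (gSym s) ginv p ξ₁ ξ₂ ξ₃
          (Matrix.mulVec (ricciOp (gSym s) ginv p) ξ₄) ∧
      Matrix.mulVec (ricciOp (gSym s) ginv p) (jacobiVec (gSym s) ginv p ξ₁ ξ₁ ξ₂) =
        jacobiVec (gSym s) ginv p ξ₁ ξ₁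
          (Matrix.mulVec (ricciOp (gSym s) ginv p) ξ₂) ∧
      Matrix.mulVec (ricciOp (gSym s) ginv p) (curvVec (gSym s) ginv p ξ₁ ξ₂ ξ₃) =
        curvVec (gSym s) ginv p ξ₁ ξ₂
          (Matrix.mulVec (ricciOp (gSym s) ginv p) ξ₃) := by
  have hE : ginv = ginvE s := by
    funext p
    calc ginv p = ginv p * (gSym s p * ginvE s p) := by
          rw [gSym_mul_ginvE, mul_one]
      _ = (ginv p * gSym s p) * ginvE s p := by rw [mul_assoc]
      _ = ginvE s p := by rw [(hginv p).2, one_mul]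
  subst hE
  intro p ξ₁ ξ₂ ξ₃ ξ₄
  refine ⟨?_, ?_, ?_, ?_⟩
  · simp only [curv4Vec, Fin.sum_univ_four, curv4_eq, ricciOp_eq,
      Matrix.mulVec, dotProduct, rhoM, R4c,
      Matrix.cons_val_zero, Matrix.cons_val_one, Matrix.cons_val_two,
      Matrix.cons_val_three, Matrix.head_cons, Matrix.tail_cons, Matrix.of_apply,
      Fin.reduceFinMk, Fin.isValue, mul_zero, zero_mul, add_zero, zero_add]
    ring
  · simp only [curv4Vec, Fin.sum_univ_four, curv4_eq, ricciOp_eq,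
      Matrix.mulVec, dotProduct, rhoM, R4c,
      Matrix.cons_val_zero, Matrix.cons_val_one, Matrix.cons_val_two,
      Matrix.cons_val_three, Matrix.head_cons, Matrix.tail_cons, Matrix.of_apply,
      Fin.reduceFinMk, Fin.isValue, mul_zero, zero_mul, add_zero, zero_add]
    ring
  · funext l
    fin_cases l <;>
      (simp only [jacobiVec, curvVec, Fin.sum_univ_four, curvOp_eq, ricciOp_eq,
        Matrix.mulVec, dotProduct, rhoM, RcE,
        Matrix.cons_val_zero, Matrix.cons_val_one, Matrix.cons_val_two,
        Matrix.cons_val_three, Matrix.head_cons, Matrix.tail_cons, Matrix.of_apply,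
        Fin.reduceFinMk, Fin.isValue, mul_zero, zero_mul, add_zero, zero_add]) <;> ring
  · funext l
    fin_cases l <;>
      (simp only [curvVec, Fin.sum_univ_four, curvOp_eq, ricciOp_eq,
        Matrix.mulVec, dotProduct, rhoM, RcE,
        Matrix.cons_val_zero, Matrix.cons_val_one, Matrix.cons_val_two,
        Matrix.cons_val_three, Matrix.head_cons, Matrix.tail_cons, Matrix.of_apply,
        Fin.reduceFinMk, Fin.isValue, mul_zero, zero_mul, add_zero, zero_add]) <;> ring
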